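/- Let f₁ = R_α be the rotation of S¹ = ℝ/ℤ by an irrational angle α, and let f₂, f₃, f₄ be the piecewise linear circle homeomorphisms with breakpoints: f₂ through (0,0), (1/4, 1/8), (1/2, 1/2), (1,1); f₃ through (0,0), (5/8, 5/8), (3/4, 7/8), (1,1); f₄ through (0,0), (1/2, 1/2), (5/8, 3/4), (7/8, 7/8), (1,1). Then S¹ is an attractor for the inverse IFS 𝓕₋ = {f₁⁻¹, f₂⁻¹, f₃⁻¹, f₄⁻¹}: for every non-empty compact set C ⊆ S¹, d_H(F₋^n(C), S¹) → 0 as n → ∞, where F₋ is the Hutchinson operator of 𝓕₋ and d_H the Hausdorff distance. -/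

import Mathlib

/-!
Every point of the circle is fixed by `f₂` (on `[1/2, 1]`) or by `f₃` (on `[0, 5/8]`), so each
set is contained in its image under the inverse Hutchinson operator and the iterates of a
compact set `C` increase. They contain the forward orbit of a point of `C` under the irrational
rotation `f₁⁻¹`, which is dense; an increasing sequence of sets with dense union in a compact
space converges to the whole space in the Hausdorff distance.
-/

open Metric Set Filter

noncomputable section

/-- The circle `S¹ = ℝ/ℤ` with its standard metric. -/
abbrev Circle1 := AddCircle (1 : ℝ)

/-- The Hutchinson operator of a family `G` of homeomorphisms:
`A ↦ ⋃_{g ∈ G} g(A)`. -/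
def hutch (G : Set (Circle1 ≃ₜ Circle1)) (A : Set Circle1) : Set Circle1 :=
  ⋃ g ∈ G, g '' A

/-- `d_F(x, y) = sup_{n ≥ 0} d_H(F^n({x}), F^n({y}))`, where `F` is the
Hutchinson operator of `G` and `d_H` is the Hausdorff distance. -/
noncomputable def dHutch (G : Set (Circle1 ≃ₜ Circle1)) (x y : Circle1) : ℝ :=
  ⨆ n : ℕ, hausdorffDist ((hutch G)^[n] {x}) ((hutch G)^[n] {y})

/-- `x` is an equicontinuous point of the Hutchinson operator of `G`:
the identity `(X, d) → (X, d_F)` is continuous at `x`. -/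
def IsEqcPoint (G : Set (Circle1 ≃ₜ Circle1)) (x : Circle1) : Prop :=
  ∀ ε > 0, ∃ δ > 0, ∀ y : Circle1, dist x y < δ → dHutch G x y < ε

/-- The Hutchinson operator of `G` is equicontinuous:
every point is an equicontinuous point. -/
def EquicontinuousHutch (G : Set (Circle1 ≃ₜ Circle1)) : Prop :=
  ∀ x : Circle1, IsEqcPoint G x

/-- The Hutchinson operator of `G` is sensitive: there is `ε > 0` such that every
non-empty open set has `d_F`-diameter at least `ε`. -/
def SensitiveHutch (G : Set (Circle1 ≃ₜ Circle1)) : Prop :=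
  ∃ ε > 0, ∀ U : Set Circle1, IsOpen U → U.Nonempty →
    ε ≤ sSup {r : ℝ | ∃ x ∈ U, ∃ y ∈ U, r = dHutch G x y}

/-- The `G`-orbit of `x`: all points `g_{ωₙ} ∘ ⋯ ∘ g_{ω₁} (x)` with each `g_{ωⱼ} ∈ G`
(including `x` itself, for `n = 0`). -/
def fOrbit (G : Set (Circle1 ≃ₜ Circle1)) (x : Circle1) : Set Circle1 :=
  {y | ∃ l : List (Circle1 ≃ₜ Circle1), (∀ g ∈ l, g ∈ G) ∧ y = l.foldl (fun z g => g z) x}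

/-- The family of inverses of the members of `G`. -/
def invFam (G : Set (Circle1 ≃ₜ Circle1)) : Set (Circle1 ≃ₜ Circle1) :=
  Homeomorph.symm '' G

/-- `S¹` is an attractor for the family `G`: `d_H(F^n(C), S¹) → 0` for every
non-empty compact set `C`. -/
def IsAttractor (G : Set (Circle1 ≃ₜ Circle1)) : Prop :=
  ∀ C : Set Circle1, IsCompact C → C.Nonempty →
    Tendsto (fun n => hausdorffDist ((hutch G)^[n] C) Set.univ) atTop (nhds 0)

/-- A Cantor set in `S¹`: non-empty, compact, perfect and totally disconnected. -/
def IsCantorIn (K : Set Circle1) : Prop :=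
  K.Nonempty ∧ IsCompact K ∧ Perfect K ∧ IsTotallyDisconnected K

/-- Lift (on the fundamental domain `[0,1]`) of the piecewise linear homeomorphism `f₂`
with breakpoints `(0,0), (1/4, 1/8), (1/2, 1/2), (1,1)`. -/
def pl2 (x : ℝ) : ℝ :=
  if x ≤ 1/4 then x/2 else if x ≤ 1/2 then 3/2 * x - 1/4 else x

/-- Lift (on the fundamental domain `[0,1]`) of the piecewise linear homeomorphism `f₃`
with breakpoints `(0,0), (5/8, 5/8), (3/4, 7/8), (1,1)`. -/
def pl3 (x : ℝ) : ℝ :=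
  if x ≤ 5/8 then x else if x ≤ 3/4 then 2 * x - 5/8 else x/2 + 1/2

/-- Lift (on the fundamental domain `[0,1]`) of the piecewise linear homeomorphism `f₄`
with breakpoints `(0,0), (1/2, 1/2), (5/8, 3/4), (7/8, 7/8), (1,1)`. -/
def pl4 (x : ℝ) : ℝ :=
  if x ≤ 1/2 then x else if x ≤ 5/8 then 2 * x - 1/2
  else if x ≤ 7/8 then x/2 + 7/16 else x

open Topology

theorem tendsto_hausdorffDist_univ_of_monotone {X : Type*} [PseudoMetricSpace X] [CompactSpace X]
    {A : ℕ → Set X} (hA : Monotone A) (hd : Dense (⋃ n, A n)) :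
    Tendsto (fun n => hausdorffDist (A n) univ) atTop (𝓝 0) := by
  refine tendsto_order.2 ⟨fun a ha => .of_forall fun n => ha.trans_le hausdorffDist_nonneg,
    fun ε hε => ?_⟩
  have hcover : univ ⊆ ⋃ n, thickening (ε / 2) (A n) := fun x _ => by
    obtain ⟨y, hxy, hy⟩ := Metric.dense_iff.1 hd x (ε / 2) (half_pos hε)
    obtain ⟨n, hn⟩ := mem_iUnion.1 hy
    exact mem_iUnion.2 ⟨n, mem_thickening_iff.2 ⟨y, hn, mem_ball'.1 hxy⟩⟩
  obtain ⟨N, hN⟩ := isCompact_univ.elim_directed_cover _ (fun _ => isOpen_thickening) hcover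
    (Monotone.directed_le fun _ _ hmn => thickening_subset_of_subset _ (hA hmn))
  refine eventually_atTop.2 ⟨N, fun n hn => ?_⟩
  have hclose : ∀ x, infDist x (A n) ≤ ε / 2 := fun x => by
    obtain ⟨z, hz, hxz⟩ := mem_thickening_iff.1 (thickening_subset_of_subset _ (hA hn)
      (hN (mem_univ x)))
    exact (infDist_le_dist_of_mem hz).trans hxz.le
  calc hausdorffDist (A n) univ ≤ ε / 2 := hausdorffDist_le_of_infDist (half_pos hε).le
        (fun x _ => by rw [infDist_zero_of_mem (mem_univ x)]; exact (half_pos hε).le)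
        (fun x _ => hclose x)
    _ < ε := half_lt_self hε

theorem AddCircle.denseRange_add_nsmul {p β : ℝ} [Fact (0 < p)] (hβ : Irrational (β / p))
    (c : AddCircle p) : DenseRange fun n : ℕ => c + n • (β : AddCircle p) :=
  (Homeomorph.addLeft c).surjective.denseRange.comp
    (denseRange_zsmul_iff_nsmul.1 (denseRange_zsmul_coe_iff.2 hβ)) (continuous_const_add c)

section Hutchinson

variable {G : Set (Circle1 ≃ₜ Circle1)}

theorem apply_mem_hutch {g : Circle1 ≃ₜ Circle1} {A : Set Circle1} {z : Circle1} (hg : g ∈ G)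
    (hz : z ∈ A) : g z ∈ hutch G A :=
  mem_biUnion hg (mem_image_of_mem _ hz)

theorem iterate_apply_mem_iterate_hutch {g : Circle1 ≃ₜ Circle1} {C : Set Circle1}
    {z : Circle1} (hg : g ∈ G) (hz : z ∈ C) (n : ℕ) : g^[n] z ∈ (hutch G)^[n] C := by
  induction n with
  | zero => exact hz
  | succ n ih =>
    rw [Function.iterate_succ_apply', Function.iterate_succ_apply']
    exact apply_mem_hutch hg ih

theorem monotone_iterate_hutch (hfix : ∀ z, ∃ g ∈ G, g z = z) (C : Set Circle1) :
    Monotone fun n => (hutch G)^[n] C :=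
  monotone_nat_of_le_succ fun n z hz => by
    obtain ⟨g, hg, hgz⟩ := hfix z
    rw [Function.iterate_succ_apply', ← hgz]
    exact apply_mem_hutch hg hz

end Hutchinson

theorem pl2_eq_self {x : ℝ} (hx : 1 / 2 ≤ x) : pl2 x = x := by
  unfold pl2
  split_ifs <;> linarith

theorem pl3_eq_self {x : ℝ} (hx : x ≤ 5 / 8) : pl3 x = x := if_pos hx

theorem isFixedPt_or_isFixedPt_of_lift_pl2_pl3 {f₂ f₃ : Circle1 ≃ₜ Circle1}
    (hf₂ : ∀ x ∈ Icc (0:ℝ) 1, f₂ (x : Circle1) = ((pl2 x : ℝ) : Circle1))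
    (hf₃ : ∀ x ∈ Icc (0:ℝ) 1, f₃ (x : Circle1) = ((pl3 x : ℝ) : Circle1)) (z : Circle1) :
    Function.IsFixedPt f₂ z ∨ Function.IsFixedPt f₃ z := by
  obtain ⟨x, rfl⟩ := QuotientAddGroup.mk_surjective z
  have hx : Int.fract x ∈ Icc (0:ℝ) 1 := ⟨Int.fract_nonneg x, (Int.fract_lt_one x).le⟩
  rw [Function.IsFixedPt, Function.IsFixedPt, ← AddCircle.coe_fract x, hf₂ _ hx, hf₃ _ hx]
  rcases le_or_gt (Int.fract x) (5 / 8) with h | h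
  · exact .inr (by rw [pl3_eq_self h])
  · exact .inl (by rw [pl2_eq_self (by linarith)])

theorem stmt8_general (α : ℝ) (hα : Irrational α)
    (f₁ f₂ f₃ f₄ : Circle1 ≃ₜ Circle1)
    (hf₁ : ∀ z : Circle1, f₁ z = z + (α : Circle1))
    (hf₂ : ∀ x ∈ Icc (0:ℝ) 1, f₂ (x : Circle1) = ((pl2 x : ℝ) : Circle1))
    (hf₃ : ∀ x ∈ Icc (0:ℝ) 1, f₃ (x : Circle1) = ((pl3 x : ℝ) : Circle1)) :
    IsAttractor {f₁.symm, f₂.symm, f₃.symm, f₄.symm} := by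
  intro C _ ⟨c, hc⟩
  have hfix : ∀ z, ∃ g ∈ ({f₁.symm, f₂.symm, f₃.symm, f₄.symm} : Set _), g z = z := fun z =>
    (isFixedPt_or_isFixedPt_of_lift_pl2_pl3 hf₂ hf₃ z).elim
      (fun h => ⟨f₂.symm, by simp, f₂.symm_apply_eq.2 h.symm⟩)
      (fun h => ⟨f₃.symm, by simp, f₃.symm_apply_eq.2 h.symm⟩)
  have hrot : ⇑f₁.symm = (· + ((-α : ℝ) : Circle1)) := funext fun z =>
    f₁.symm_apply_eq.2 (by rw [hf₁, AddCircle.coe_neg, neg_add_cancel_right])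
  refine tendsto_hausdorffDist_univ_of_monotone (monotone_iterate_hutch hfix C)
    ((AddCircle.denseRange_add_nsmul (β := -α) (by simpa using hα.neg) c).mono ?_)
  rintro _ ⟨n, rfl⟩
  have horbit := iterate_apply_mem_iterate_hutch (G := {f₁.symm, f₂.symm, f₃.symm, f₄.symm})
    (g := f₁.symm) (by simp) hc n
  rw [hrot, add_right_iterate] at horbit
  exact mem_iUnion.2 ⟨n, horbit⟩

/-- In the same situation, `S¹` is an attractor for the inverse IFS
`𝓕₋ = {f₁⁻¹, f₂⁻¹, f₃⁻¹, f₄⁻¹}`. -/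
theorem stmt8 (α : ℝ) (hα : Irrational α)
    (f₁ f₂ f₃ f₄ : Circle1 ≃ₜ Circle1)
    (hf₁ : ∀ z : Circle1, f₁ z = z + (α : Circle1))
    (hf₂ : ∀ x ∈ Icc (0:ℝ) 1, f₂ (x : Circle1) = ((pl2 x : ℝ) : Circle1))
    (hf₃ : ∀ x ∈ Icc (0:ℝ) 1, f₃ (x : Circle1) = ((pl3 x : ℝ) : Circle1))
    (hf₄ : ∀ x ∈ Icc (0:ℝ) 1, f₄ (x : Circle1) = ((pl4 x : ℝ) : Circle1)) :
    IsAttractor {f₁.symm, f₂.symm, f₃.symm, f₄.symm} :=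
  stmt8_general α hα f₁ f₂ f₃ f₄ hf₁ hf₂ hf₃
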